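/- Let γ₁₁, γ₁₂, γ₂₂ : ℝ² → ℝ be differentiable with γ(x) ≠ 0 for all x (γ := γ₁₁γ₂₂ − γ₁₂²), let h : ℝ² → ℝ be differentiable, and let g ∈ ℝ. Then the covariant divergence of the pressure tensor P^{ij} := ½ g h² γ^{ij} reduces to a pure gradient term: for each i ∈ {1,2} and every point x₀, Σ_j ∂_j(½ g h² γ^{ij}) + Σ_{j,k} Γ^i_{jk} (½ g h² γ^{kj}) + Σ_{j,k} Γ^j_{jk} (½ g h² γ^{ik}) = g h Σ_j γ^{ij} ∂_j h at x₀. -/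

import Mathlib

open Real

noncomputable section

/-- Partial derivative in direction `j` (j = 0 ↦ ∂₁, j = 1 ↦ ∂₂) of a scalar
function on ℝ². -/
def pd (j : Fin 2) (f : ℝ × ℝ → ℝ) (x : ℝ × ℝ) : ℝ :=
  fderiv ℝ f x (if j = 0 then ((1 : ℝ), (0 : ℝ)) else ((0 : ℝ), (1 : ℝ)))

/-- Covariant components of the symmetric metric tensor (γ₂₁ = γ₁₂). -/
def gcov (g11 g12 g22 : ℝ × ℝ → ℝ) : Fin 2 → Fin 2 → ℝ × ℝ → ℝ :=
  fun i j => !![g11, g12; g12, g22] i j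

/-- Determinant γ = γ₁₁γ₂₂ − γ₁₂² of the metric. -/
def gdet (g11 g12 g22 : ℝ × ℝ → ℝ) (x : ℝ × ℝ) : ℝ :=
  g11 x * g22 x - g12 x ^ 2

/-- Contravariant (inverse) components of the metric:
γ^{11} = γ₂₂/γ, γ^{12} = γ^{21} = −γ₁₂/γ, γ^{22} = γ₁₁/γ. -/
def gcon (g11 g12 g22 : ℝ × ℝ → ℝ) : Fin 2 → Fin 2 → ℝ × ℝ → ℝ :=
  fun i j =>
    !![fun x => g22 x / gdet g11 g12 g22 x,
       fun x => -g12 x / gdet g11 g12 g22 x;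
       fun x => -g12 x / gdet g11 g12 g22 x,
       fun x => g11 x / gdet g11 g12 g22 x] i j

/-- Christoffel symbols
Γ^i_{jk} = ½ Σ_m γ^{im} (∂_j γ_{km} + ∂_k γ_{jm} − ∂_m γ_{jk}). -/
def Gamma (g11 g12 g22 : ℝ × ℝ → ℝ) (i j k : Fin 2) (x : ℝ × ℝ) : ℝ :=
  (1 / 2) * ∑ m : Fin 2, gcon g11 g12 g22 i m x *
    (pd j (gcov g11 g12 g22 k m) x + pd k (gcov g11 g12 g22 j m) x
      - pd m (gcov g11 g12 g22 j k) x)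

/-!
Write the pressure tensor as `p γ^{ij}` with `p = ½ g h²`. The Leibniz rule splits its covariant
divergence into `γ^{ij} ∂_j p = g h γ^{ij} ∂_j h` plus `p` times the covariant divergence
`∂_j γ^{ij} + Γ^i_{jk} γ^{kj} + Γ^j_{jk} γ^{ik}` of the inverse metric, which vanishes because the
Levi-Civita connection is metric compatible. In two dimensions the latter is a rational identity in
the metric and its first derivatives once `∂_j γ^{ik} = -γ^{im} (∂_j γ_{mn}) γ^{nk}` is substituted.
-/

lemma pd_sub {f u : ℝ × ℝ → ℝ} {x : ℝ × ℝ} (hf : DifferentiableAt ℝ f x)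
    (hu : DifferentiableAt ℝ u x) (j : Fin 2) :
    pd j (fun y => f y - u y) x = pd j f x - pd j u x := by
  simp only [pd, fderiv_fun_sub hf hu, sub_apply]

lemma pd_neg (f : ℝ × ℝ → ℝ) (x : ℝ × ℝ) (j : Fin 2) :
    pd j (fun y => -f y) x = -pd j f x := by
  simp only [pd, fderiv_fun_neg, neg_apply]

lemma pd_mul {f u : ℝ × ℝ → ℝ} {x : ℝ × ℝ} (hf : DifferentiableAt ℝ f x)
    (hu : DifferentiableAt ℝ u x) (j : Fin 2) :
    pd j (fun y => f y * u y) x = pd j f x * u x + f x * pd j u x := by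
  simp only [pd, fderiv_fun_mul hf hu, add_apply, smul_apply, smul_eq_mul]
  ring

lemma pd_const_mul {f : ℝ × ℝ → ℝ} {x : ℝ × ℝ} (hf : DifferentiableAt ℝ f x) (c : ℝ)
    (j : Fin 2) : pd j (fun y => c * f y) x = c * pd j f x := by
  simp only [pd, fderiv_const_mul hf, smul_apply, smul_eq_mul]

lemma pd_pow {f : ℝ × ℝ → ℝ} {x : ℝ × ℝ} (hf : DifferentiableAt ℝ f x) (n : ℕ)
    (j : Fin 2) : pd j (fun y => f y ^ n) x = n * f x ^ (n - 1) * pd j f x := by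
  simp only [pd, fderiv_fun_pow n hf, smul_apply, smul_eq_mul, nsmul_eq_mul]

lemma pd_inv {u : ℝ × ℝ → ℝ} {x : ℝ × ℝ} (hu : DifferentiableAt ℝ u x) (hu0 : u x ≠ 0)
    (j : Fin 2) : pd j (fun y => (u y)⁻¹) x = -pd j u x / u x ^ 2 := by
  have hcomp : fderiv ℝ (fun y => (u y)⁻¹) x = _ :=
    ((hasFDerivAt_inv hu0).comp x hu.hasFDerivAt).fderiv
  simp only [pd, hcomp, ContinuousLinearMap.comp_apply,
    ContinuousLinearMap.toSpanSingleton_apply, smul_eq_mul]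
  ring

lemma pd_div {f u : ℝ × ℝ → ℝ} {x : ℝ × ℝ} (hf : DifferentiableAt ℝ f x)
    (hu : DifferentiableAt ℝ u x) (hu0 : u x ≠ 0) (j : Fin 2) :
    pd j (fun y => f y / u y) x = (pd j f x * u x - f x * pd j u x) / u x ^ 2 := by
  have hdiv : (fun y => f y / u y) = fun y => f y * (u y)⁻¹ := funext fun y => div_eq_mul_inv _ _
  rw [hdiv, pd_mul (u := fun y => (u y)⁻¹) hf (hu.inv hu0), pd_inv hu hu0]
  field_simp
  ring

section Metric

variable {g11 g12 g22 : ℝ × ℝ → ℝ} {x : ℝ × ℝ}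

lemma differentiableAt_gdet (h11 : DifferentiableAt ℝ g11 x) (h12 : DifferentiableAt ℝ g12 x)
    (h22 : DifferentiableAt ℝ g22 x) : DifferentiableAt ℝ (gdet g11 g12 g22) x :=
  (h11.fun_mul h22).fun_sub (h12.fun_pow 2)

lemma pd_gdet (h11 : DifferentiableAt ℝ g11 x) (h12 : DifferentiableAt ℝ g12 x)
    (h22 : DifferentiableAt ℝ g22 x) (j : Fin 2) :
    pd j (gdet g11 g12 g22) x
      = pd j g11 x * g22 x + g11 x * pd j g22 x - 2 * g12 x * pd j g12 x := by
  unfold gdet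
  rw [pd_sub (h11.fun_mul h22) (h12.fun_pow 2), pd_mul h11 h22, pd_pow h12]
  norm_num

lemma pd_gcon (h11 : DifferentiableAt ℝ g11 x) (h12 : DifferentiableAt ℝ g12 x)
    (h22 : DifferentiableAt ℝ g22 x) (hγ : gdet g11 g12 g22 x ≠ 0) (i j k : Fin 2) :
    pd j (gcon g11 g12 g22 i k) x
      = -∑ m : Fin 2, ∑ n : Fin 2, gcon g11 g12 g22 i m x * pd j (gcov g11 g12 g22 m n) x
          * gcon g11 g12 g22 n k x := by
  have hγ' := differentiableAt_gdet h11 h12 h22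
  have h12' := h12.fun_neg
  fin_cases i <;> fin_cases k <;>
  · simp only [gcon, gcov, Fin.sum_univ_two, Fin.zero_eta, Fin.mk_one, Fin.isValue,
      Matrix.of_apply, Matrix.cons_val', Matrix.cons_val_zero, Matrix.cons_val_one,
      Matrix.cons_val_fin_one]
    rw [pd_div (by assumption) hγ' hγ, pd_gdet h11 h12 h22]
    try rw [pd_neg]
    field_simp
    unfold gdet
    ring

lemma differentiableAt_gcon (h11 : DifferentiableAt ℝ g11 x) (h12 : DifferentiableAt ℝ g12 x)
    (h22 : DifferentiableAt ℝ g22 x) (hγ : gdet g11 g12 g22 x ≠ 0) (i k : Fin 2) :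
    DifferentiableAt ℝ (gcon g11 g12 g22 i k) x := by
  have hγ' := differentiableAt_gdet h11 h12 h22
  fin_cases i <;> fin_cases k <;>
  · simp only [gcon, Fin.zero_eta, Fin.mk_one, Fin.isValue, Matrix.of_apply, Matrix.cons_val',
      Matrix.cons_val_zero, Matrix.cons_val_one, Matrix.cons_val_fin_one, div_eq_mul_inv]
    fun_prop (disch := exact hγ)

theorem covariant_divergence_gcon_eq_zero (h11 : DifferentiableAt ℝ g11 x)
    (h12 : DifferentiableAt ℝ g12 x) (h22 : DifferentiableAt ℝ g22 x)
    (hγ : gdet g11 g12 g22 x ≠ 0) (i : Fin 2) :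
    ∑ j : Fin 2, pd j (gcon g11 g12 g22 i j) x
      + ∑ j : Fin 2, ∑ k : Fin 2, Gamma g11 g12 g22 i j k x * gcon g11 g12 g22 k j x
      + ∑ j : Fin 2, ∑ k : Fin 2, Gamma g11 g12 g22 j j k x * gcon g11 g12 g22 i k x
      = 0 := by
  simp only [pd_gcon h11 h12 h22 hγ, _root_.Gamma]
  fin_cases i <;>
  · simp only [gcon, gcov, Fin.sum_univ_two, Fin.zero_eta, Fin.mk_one, Fin.isValue,
      Matrix.of_apply, Matrix.cons_val', Matrix.cons_val_zero, Matrix.cons_val_one,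
      Matrix.cons_val_fin_one]
    field_simp
    ring

end Metric

/-- the covariant divergence of the pressure tensor
P^{ij} = ½ g h² γ^{ij} reduces to the pure gradient term g h γ^{ij} ∂_j h. -/
theorem covariant_divergence_pressure (g11 g12 g22 h : ℝ × ℝ → ℝ) (g : ℝ)
    (h11 : Differentiable ℝ g11) (h12 : Differentiable ℝ g12)
    (h22 : Differentiable ℝ g22) (hh : Differentiable ℝ h)
    (hγ : ∀ x, gdet g11 g12 g22 x ≠ 0) :
    ∀ (i : Fin 2) (x₀ : ℝ × ℝ),
      (∑ j : Fin 2,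
          pd j (fun y => (1 / 2) * g * h y ^ 2 * gcon g11 g12 g22 i j y) x₀)
        + (∑ j : Fin 2, ∑ k : Fin 2, Gamma g11 g12 g22 i j k x₀ *
            ((1 / 2) * g * h x₀ ^ 2 * gcon g11 g12 g22 k j x₀))
        + (∑ j : Fin 2, ∑ k : Fin 2, Gamma g11 g12 g22 j j k x₀ *
            ((1 / 2) * g * h x₀ ^ 2 * gcon g11 g12 g22 i k x₀))
      = g * h x₀ * ∑ j : Fin 2, gcon g11 g12 g22 i j x₀ * pd j h x₀ := by
  intro i x₀
  have hpressure : ∀ j, pd j (fun y => (1 / 2) * g * h y ^ 2 * gcon g11 g12 g22 i j y) x₀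
      = g * h x₀ * pd j h x₀ * gcon g11 g12 g22 i j x₀
        + (1 / 2) * g * h x₀ ^ 2 * pd j (gcon g11 g12 g22 i j) x₀ := by
    intro j
    rw [pd_mul (((hh x₀).fun_pow 2).const_mul _)
        (differentiableAt_gcon (h11 x₀) (h12 x₀) (h22 x₀) (hγ x₀) i j),
      pd_const_mul ((hh x₀).fun_pow 2), pd_pow (hh x₀)]
    push_cast
    ring
  have hdiv := covariant_divergence_gcon_eq_zero (h11 x₀) (h12 x₀) (h22 x₀) (hγ x₀) i
  simp only [hpressure, Fin.sum_univ_two] at hdiv ⊢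
  linear_combination (1 / 2) * g * h x₀ ^ 2 * hdiv
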